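/- The presented group with generators x₁, x₂, x₃, x₄ and defining relations x₂ = x₃, x₁ = x₃⁻¹x₄x₃, (x₁x₂)⁴ = (x₂x₁)⁴, x₃ = x₂x₁x₂x₁x₂x₁⁻¹x₂⁻¹x₁⁻¹x₂⁻¹, x₃⁻¹x₄x₃ = x₂x₁x₂x₁x₂⁻¹x₁⁻¹x₂⁻¹, and x₄x₃x₂x₁ = e is isomorphic to the presented group ⟨a₁, a₂ | (a₁a₂)² = e⟩. -/

import Mathlib

/-- Generators: `x₁, x₂, x₃, x₄` are `x 0, x 1, x 2, x 3`. -/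
private def x : Fin 4 → FreeGroup (Fin 4) := FreeGroup.of

/-- The relators of the presentation of `π₁` of the complement of the arrangement `𝒞₂`:
`x₂ = x₃`, `x₁ = x₃⁻¹x₄x₃`, `(x₁x₂)⁴ = (x₂x₁)⁴`, `x₃ = x₂x₁x₂x₁x₂x₁⁻¹x₂⁻¹x₁⁻¹x₂⁻¹`,
`x₃⁻¹x₄x₃ = x₂x₁x₂x₁x₂⁻¹x₁⁻¹x₂⁻¹`, `x₄x₃x₂x₁ = e`. -/
def relsC2vk : Set (FreeGroup (Fin 4)) :=
  { x 1 * (x 2)⁻¹,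
    x 0 * ((x 2)⁻¹ * x 3 * x 2)⁻¹,
    (x 0 * x 1) ^ 4 * ((x 1 * x 0) ^ 4)⁻¹,
    x 2 * (x 1 * x 0 * x 1 * x 0 * x 1 * (x 0)⁻¹ * (x 1)⁻¹ * (x 0)⁻¹ * (x 1)⁻¹)⁻¹,
    (x 2)⁻¹ * x 3 * x 2 * (x 1 * x 0 * x 1 * x 0 * (x 1)⁻¹ * (x 0)⁻¹ * (x 1)⁻¹)⁻¹,
    x 3 * x 2 * x 1 * x 0 }

/-- The target presentation `⟨a₁, a₂ | (a₁a₂)² = e⟩`. -/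
def relA2 : Set (FreeGroup (Fin 2)) :=
  {(FreeGroup.of 0 * FreeGroup.of 1) ^ 2}

/-! Tietze transformations: the relations `x₂ = x₃` and `x₁ = x₃⁻¹x₄x₃` eliminate `x₂` and `x₄`,
after which `x₄x₃x₂x₁ = e` reads `(x₃x₁)² = e`, and the three remaining relations are consequences
of it. Hence `a₁ ↦ x₃, a₂ ↦ x₁` is an isomorphism, inverse to `x₁ ↦ a₂, x₂, x₃ ↦ a₁, x₄ ↦ a₁a₂a₁⁻¹`. -/

theorem PresentedGroup.mk_of {α : Type*} {rels : Set (FreeGroup α)} (a : α) :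
    PresentedGroup.mk rels (FreeGroup.of a) = PresentedGroup.of a :=
  rfl

namespace PresentedGroupC2

section

variable {G : Type*} [Group G]

theorem lift_relA2_eq_one {a b : G} (h : (a * b) ^ 2 = 1) :
    ∀ r ∈ relA2, FreeGroup.lift ![a, b] r = 1 := by
  rintro r rfl
  simpa using h

theorem lift_relsC2vk_eq_one {a b : G} (h : (a * b) ^ 2 = 1) :
    ∀ r ∈ relsC2vk, FreeGroup.lift ![b, a, a, a * b * a⁻¹] r = 1 := by
  have hab : a * b * (a * b) = 1 := by rwa [← sq]
  have hba : b * a * (b * a) = 1 := by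
    calc b * a * (b * a) = a⁻¹ * (a * b * (a * b)) * a := by group
      _ = 1 := by rw [hab]; group
  rintro r (rfl | rfl | rfl | rfl | rfl | rfl) <;>
    simp only [x, map_mul, map_inv, map_pow, FreeGroup.lift_apply_of, Matrix.cons_val]
  · group
  · group
  · rw [show 4 = 2 * 2 from rfl, pow_mul, pow_mul, h, sq (b * a), hba]
    group
  · calc a * (a * b * a * b * a * b⁻¹ * a⁻¹ * b⁻¹ * a⁻¹)⁻¹
        = a * (a * b * (a * b) * a * (a * b * (a * b))⁻¹)⁻¹ := by group
      _ = 1 := by rw [hab]; group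
  · calc a⁻¹ * (a * b * a⁻¹) * a * (a * b * a * b * a⁻¹ * b⁻¹ * a⁻¹)⁻¹
        = b * a * (b * a) * (a * b * (a * b))⁻¹ := by group
      _ = 1 := by rw [hab, hba]; group
  · calc a * b * a⁻¹ * a * a * b = a * b * (a * b) := by group
      _ = 1 := hab

end

local notation "X" => (PresentedGroup.of : Fin 4 → PresentedGroup relsC2vk)

theorem of_one_eq_of_two : X 1 = X 2 :=
  PresentedGroup.mk_eq_mk_of_mul_inv_mem (x := x 1) (y := x 2) (Set.mem_insert _ _)

theorem of_three_eq_conj : X 3 = X 2 * X 0 * (X 2)⁻¹ := by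
  have h : X 0 = (X 2)⁻¹ * X 3 * X 2 := by
    simpa [x, PresentedGroup.mk_of] using PresentedGroup.mk_eq_mk_of_mul_inv_mem
      (x := x 0) (y := (x 2)⁻¹ * x 3 * x 2) (by simp [relsC2vk])
  rw [h]
  group

theorem of_two_mul_of_zero_sq : (X 2 * X 0) ^ 2 = 1 := by
  have h : X 3 * X 2 * X 1 * X 0 = 1 := by
    simpa [x, PresentedGroup.mk_of] using PresentedGroup.one_of_mem
      (x := x 3 * x 2 * x 1 * x 0) (by simp [relsC2vk])
  rw [of_one_eq_of_two, of_three_eq_conj] at h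
  calc (X 2 * X 0) ^ 2 = X 2 * X 0 * (X 2)⁻¹ * X 2 * X 2 * X 0 := by rw [sq]; group
    _ = 1 := h

local notation "A" => (PresentedGroup.of : Fin 2 → PresentedGroup relA2)

theorem of_zero_mul_of_one_sq : (A 0 * A 1) ^ 2 = 1 :=
  PresentedGroup.one_of_mem rfl

noncomputable def toA2 : PresentedGroup relsC2vk →* PresentedGroup relA2 :=
  PresentedGroup.toGroup (lift_relsC2vk_eq_one of_zero_mul_of_one_sq)

noncomputable def ofA2 : PresentedGroup relA2 →* PresentedGroup relsC2vk :=
  PresentedGroup.toGroup (lift_relA2_eq_one of_two_mul_of_zero_sq)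

theorem ofA2_comp_toA2 : ofA2.comp toA2 = MonoidHom.id _ := by
  refine PresentedGroup.ext fun i => ?_
  fin_cases i <;> simp [toA2, ofA2, of_one_eq_of_two, ← of_three_eq_conj]

theorem toA2_comp_ofA2 : toA2.comp ofA2 = MonoidHom.id _ := by
  refine PresentedGroup.ext fun i => ?_
  fin_cases i <;> simp [toA2, ofA2]

noncomputable def equivA2 : PresentedGroup relsC2vk ≃* PresentedGroup relA2 :=
  toA2.toMulEquiv ofA2 ofA2_comp_toA2 toA2_comp_ofA2

end PresentedGroupC2

theorem presentation_C2 :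
    Nonempty (PresentedGroup relsC2vk ≃* PresentedGroup relA2) :=
  ⟨PresentedGroupC2.equivA2⟩
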